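/- Suppose w_e|_{K_{i(e)}} is uniformly continuous for every e ∈ E. Then Φ(F(M)) = M for every equilibrium state M ∈ E(M). -/

import Mathlib

open MeasureTheory Filter Topology
open scoped ENNReal NNReal Classical

noncomputable section

/-- A countable Markov system `(K_{i(e)}, w_e, p_e)_{e ∈ E}` on a metric space `K`:
a partition `(K_j)_{j ∈ N}` of `K` into nonempty Borel sets, source and target maps
`i, t : E → N` (`i` surjective), and for each `e ∈ E` Borel maps `w_e` and probability
functions `p_e` (extended by zero outside `K_{i(e)}`) with
`∑_{e, i(e)=j} p_e(y) = 1` for `y ∈ K_j`. -/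
structure MarkovSystem (K : Type*) [MetricSpace K] [MeasurableSpace K]
    (N : Type*) (E : Type*) where
  Kset : N → Set K
  Kset_nonempty : ∀ j, (Kset j).Nonempty
  Kset_measurable : ∀ j, MeasurableSet (Kset j)
  Kset_disjoint : Pairwise (Function.onFun Disjoint Kset)
  Kset_cover : (⋃ j, Kset j) = Set.univ
  i : E → N
  t : E → N
  i_surj : Function.Surjective i
  w : E → K → K
  p : E → K → ℝ
  w_measurable : ∀ e, Measurable (w e)
  p_measurable : ∀ e, Measurable (p e)
  p_nonneg : ∀ e x, 0 ≤ p e x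
  p_le_one : ∀ e x, p e x ≤ 1
  p_zero_outside : ∀ e x, x ∉ Kset (i e) → p e x = 0
  w_mapsTo : ∀ e, Set.MapsTo (w e) (Kset (i e)) (Kset (t e))
  p_pos_somewhere : ∀ e, ∃ x ∈ Kset (i e), 0 < p e x
  p_tsum_one : ∀ j, ∀ x ∈ Kset j, (∑' e : {e : E // i e = j}, p e.val x) = 1

/-- `Ē = E ∪ {∞}` (one-point compactification); with `E` countable its Borel σ-algebra
consists of all subsets. -/
instance optionMeasurableSpace (E : Type*) : MeasurableSpace (Option E) := ⊤

/-- The code space `Σ̄ = Ē^ℤ`, carrying the product σ-algebra. -/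
abbrev CodeSpace (E : Type*) : Type _ := ℤ → Option E

/-- The left shift `S` on the code space, `(Sσ)_{k-1} = σ_k`. -/
def shiftMap (E : Type*) : CodeSpace E → CodeSpace E := fun σ k => σ (k + 1)

/-- The cylinder set `_m[es₀, …, es_{n}] = {σ : σ_{m+k} = es_k}`. -/
def cylSetL {E : Type*} (m : ℤ) (es : List (Option E)) : Set (CodeSpace E) :=
  {σ | ∀ (k : ℕ) (h : k < es.length), σ (m + (k : ℤ)) = es.get ⟨k, h⟩}

/-- The σ-algebra `𝓕` generated by the cylinder sets `_m[e_m, …, e_0]`, `m ≤ 0`. -/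
def pastAlgebra (E : Type*) : MeasurableSpace (CodeSpace E) :=
  MeasurableSpace.generateFrom
    {A | ∃ es : List (Option E), es ≠ [] ∧ A = cylSetL (1 - (es.length : ℤ)) es}

/-- The conditional entropy `h_S(Λ) = H_Λ((_1[e])_{e ∈ Ē} | 𝓕)`. -/
def entropyS {E : Type*} (Λ : Measure (CodeSpace E)) : ℝ≥0∞ :=
  ∑' eo : Option E,
    ∫⁻ σ, ENNReal.ofReal
        (Real.negMulLog
          ((Λ[Set.indicator {τ : CodeSpace E | τ 1 = eo} (fun _ => (1 : ℝ)) | pastAlgebra E]) σ)) ∂Λ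

namespace MarkovSystem

variable {K : Type*} [MetricSpace K] [MeasurableSpace K] {N E : Type*}

/-- The Markov operator `Uf = ∑_e p_e · (f ∘ w_e)` acting on nonnegative Borel functions. -/
def markovOp (M : MarkovSystem K N E) (f : K → ℝ≥0∞) : K → ℝ≥0∞ :=
  fun x => ∑' e : E, ENNReal.ofReal (M.p e x) * f (M.w e x)

/-- The adjoint operator `U*` acting on measures, `(U*ν)(B) = ∫ U(1_B) dν`. -/
def adjOp (M : MarkovSystem K N E) (ν : Measure K) : Measure K :=
  Measure.sum fun e : E =>
    Measure.map (M.w e) (ν.withDensity fun x => ENNReal.ofReal (M.p e x))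

/-- `μ ∈ P(M)`: `μ` is an invariant Borel probability measure, `U*μ = μ`. -/
def IsInvariantMeasure (M : MarkovSystem K N E) (μ : Measure K) : Prop :=
  IsProbabilityMeasure μ ∧ M.adjOp μ = μ

/-- The path space `Σ_G`: all coordinates lie in `E` and `i(σ_{n+1}) = t(σ_n)`. -/
def pathSpace (M : MarkovSystem K N E) : Set (CodeSpace E) :=
  {σ | ∀ n : ℤ, ∃ e e' : E, σ n = some e ∧ σ (n + 1) = some e' ∧ M.i e' = M.t e}

/-- `T_j = {σ ∈ Σ_G : t(σ_0) = j}`. -/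
def Tset (M : MarkovSystem K N E) (j : N) : Set (CodeSpace E) :=
  {σ | σ ∈ M.pathSpace ∧ ∃ e : E, σ 0 = some e ∧ M.t e = j}

/-- `w` extended to `Ē`, with `w_∞ = id`. -/
def wext (M : MarkovSystem K N E) : Option E → K → K := fun o => o.elim id M.w

/-- `p` extended to `Ē`, with `p_∞ = 0`. -/
def pext (M : MarkovSystem K N E) : Option E → K → ℝ := fun o => o.elim (fun _ => 0) M.p

/-- `i` extended to `Ē`, with `i(∞) = j₀`. -/
def iext (M : MarkovSystem K N E) (j0 : N) : Option E → N := fun o => o.elim j0 M.i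

/-- `t` extended to `Ē`, with `t(∞) = j₀`. -/
def text (M : MarkovSystem K N E) (j0 : N) : Option E → N := fun o => o.elim j0 M.t

/-- `iterW M σ n y = w_{σ_0} ∘ w_{σ_{-1}} ∘ ⋯ ∘ w_{σ_{-n}} (y)`. -/
def iterW (M : MarkovSystem K N E) (σ : CodeSpace E) : ℕ → K → K
  | 0, y => M.wext (σ 0) y
  | n + 1, y => M.iterW σ n (M.wext (σ (-(n + 1 : ℤ))) y)

/-- `orbit M j0 xp σ n = w_{σ_0} ∘ ⋯ ∘ w_{σ_{-n}} (x_{i(σ_{-n})})`. -/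
def orbit (M : MarkovSystem K N E) (j0 : N) (xp : N → K) (σ : CodeSpace E) (n : ℕ) : K :=
  M.iterW σ n (xp (M.iext j0 (σ (-(n : ℤ)))))

/-- `D`: the set of `σ ∈ Σ_G` for which `lim_{m → -∞} w_{σ_0} ∘ ⋯ ∘ w_{σ_m}(x_{i(σ_m)})` exists. -/
def codeDomain (M : MarkovSystem K N E) (j0 : N) (xp : N → K) : Set (CodeSpace E) :=
  {σ | σ ∈ M.pathSpace ∧ ∃ l : K, Tendsto (fun n : ℕ => M.orbit j0 xp σ n) atTop (𝓝 l)}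

/-- The coding map `F`: the above limit on `D`, and `x_{t(σ_0)}` elsewhere. -/
def code (M : MarkovSystem K N E) (j0 : N) (xp : N → K) (σ : CodeSpace E) : K :=
  if h : σ ∈ M.codeDomain j0 xp then h.2.choose else xp (M.text j0 (σ 0))

/-- `Λ ∈ E(M)`: `Λ` is a shift-invariant Borel probability measure with `Λ(D) = 1` and
`E_Λ(1_{_1[e]} | 𝓕) = p_e ∘ F` `Λ`-a.e. for every `e ∈ E` (an equilibrium state). -/
def IsEquilibrium (M : MarkovSystem K N E) (j0 : N) (xp : N → K)
    (Λ : Measure (CodeSpace E)) : Prop :=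
  IsProbabilityMeasure Λ ∧ Measure.map (shiftMap E) Λ = Λ ∧
    Λ (M.codeDomain j0 xp) = 1 ∧
    ∀ e : E,
      (Λ[Set.indicator {σ : CodeSpace E | σ 1 = some e} (fun _ => (1 : ℝ)) | pastAlgebra E])
        =ᵐ[Λ] fun σ => M.p e (M.code j0 xp σ)

/-- `pbar` is the family of continuous extensions `p̄_e` of `p_e|_{K_{i(e)}}` to the closure
of `K_{i(e)}`, extended further by zero on `K`. -/
def IsUCExtensionP (M : MarkovSystem K N E) (pbar : E → K → ℝ) : Prop :=
  ∀ e : E, ContinuousOn (pbar e) (closure (M.Kset (M.i e))) ∧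
    (∀ x ∈ M.Kset (M.i e), pbar e x = M.p e x) ∧
    (∀ x, x ∉ closure (M.Kset (M.i e)) → pbar e x = 0)

/-- `wb` is a family of continuous extensions `w̄_e` of `w_e|_{K_{i(e)}}` to the closure
of `K_{i(e)}`. -/
def IsUCExtensionW (M : MarkovSystem K N E) (wb : E → K → K) : Prop :=
  ∀ e : E, ContinuousOn (wb e) (closure (M.Kset (M.i e))) ∧
    (∀ x ∈ M.Kset (M.i e), wb e x = M.w e x)

/-- The Markov system is uniformly continuous: each `w_e|_{K_{i(e)}}` and `p_e|_{K_{i(e)}}`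
is uniformly continuous. -/
def IsUniformlyContinuous (M : MarkovSystem K N E) : Prop :=
  ∀ e : E, UniformContinuousOn (M.w e) (M.Kset (M.i e)) ∧
    UniformContinuousOn (M.p e) (M.Kset (M.i e))

/-- `∂p_e = p̄_e · 1_{cl(K_{i(e)}) \ K_{i(e)}}`. -/
def dp (M : MarkovSystem K N E) (pbar : E → K → ℝ) (e : E) : K → ℝ :=
  Set.indicator (closure (M.Kset (M.i e)) \ M.Kset (M.i e)) (pbar e)

/-- `Λ ∈ Ẽ(M)` (asymptotic state): shift-invariant probability with `Λ(D) = 1` and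
`E_Λ(1_{_1[e]} | 𝓕) = (p̄_e ∘ F)·1_{T_{i(e)}}` `Λ`-a.e. for every `e`. -/
def IsAsymptotic (M : MarkovSystem K N E) (j0 : N) (xp : N → K) (pbar : E → K → ℝ)
    (Λ : Measure (CodeSpace E)) : Prop :=
  IsProbabilityMeasure Λ ∧ Measure.map (shiftMap E) Λ = Λ ∧
    Λ (M.codeDomain j0 xp) = 1 ∧
    ∀ e : E,
      (Λ[Set.indicator {σ : CodeSpace E | σ 1 = some e} (fun _ => (1 : ℝ)) | pastAlgebra E])
        =ᵐ[Λ] Set.indicator (M.Tset (M.i e)) (fun σ => pbar e (M.code j0 xp σ))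

/-- `Λ ∈ E_⊥(M)`: shift-invariant probability with `Λ(D) = 1` and
`E_Λ(1_{_1[e]} | 𝓕) = (∂p_e ∘ F)·1_{T_{i(e)}}` `Λ`-a.e. for every `e`. -/
def IsPerp (M : MarkovSystem K N E) (j0 : N) (xp : N → K) (pbar : E → K → ℝ)
    (Λ : Measure (CodeSpace E)) : Prop :=
  IsProbabilityMeasure Λ ∧ Measure.map (shiftMap E) Λ = Λ ∧
    Λ (M.codeDomain j0 xp) = 1 ∧
    ∀ e : E,
      (Λ[Set.indicator {σ : CodeSpace E | σ 1 = some e} (fun _ => (1 : ℝ)) | pastAlgebra E])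
        =ᵐ[Λ] Set.indicator (M.Tset (M.i e)) (fun σ => M.dp pbar e (M.code j0 xp σ))

/-- `G = ⋃_{k ≥ 0} ⋃_{j ∈ N} S^{-k}(F^{-1}(K_j) ∩ T_j)`. -/
def Gset (M : MarkovSystem K N E) (j0 : N) (xp : N → K) : Set (CodeSpace E) :=
  ⋃ (k : ℕ) (j : N), (shiftMap E)^[k] ⁻¹' ((M.code j0 xp) ⁻¹' (M.Kset j) ∩ M.Tset j)

/-- `M` is non-degenerate: for every asymptotic state `Λ` there is `i ∈ N` with
`Λ(T_i ∩ F^{-1}(K_i)) > 0`. -/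
def IsNonDegenerate (M : MarkovSystem K N E) (j0 : N) (xp : N → K) (pbar : E → K → ℝ) : Prop :=
  ∀ Λ : Measure (CodeSpace E), M.IsAsymptotic j0 xp pbar Λ →
    ∃ i : N, 0 < Λ (M.Tset i ∩ (M.code j0 xp) ⁻¹' (M.Kset i))

/-- `M` is consistent: `F(Λ) ∈ P(M)` for every asymptotic state `Λ`. -/
def IsConsistent (M : MarkovSystem K N E) (j0 : N) (xp : N → K) (pbar : E → K → ℝ) : Prop :=
  ∀ Λ : Measure (CodeSpace E), M.IsAsymptotic j0 xp pbar Λ →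
    M.IsInvariantMeasure (Measure.map (M.code j0 xp) Λ)

/-- `Rf = ∑_e ∂p_e · (f ∘ w̄_e)`. -/
def Rop (M : MarkovSystem K N E) (pbar : E → K → ℝ) (wb : E → K → K)
    (f : K → ℝ≥0∞) : K → ℝ≥0∞ :=
  fun x => ∑' e : E, ENNReal.ofReal (M.dp pbar e x) * f (wb e x)

/-- `Ω = ⋂_{n ≥ 1} {R^n 1 ≥ 1}`. -/
def OmegaSet (M : MarkovSystem K N E) (pbar : E → K → ℝ) (wb : E → K → K) : Set K :=
  ⋂ n : ℕ, {x : K | 1 ≤ (M.Rop pbar wb)^[n + 1] (fun _ => 1) x}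

/-- `ξ_j = ∑_{e, i(e) = j} sup_{x ∈ K_j} p_e(x)`. -/
def xi (M : MarkovSystem K N E) (j : N) : ℝ≥0∞ :=
  ∑' e : {e : E // M.i e = j}, ⨆ x ∈ M.Kset j, ENNReal.ofReal (M.p e.val x)

/-- `M` has a dominating Markov chain: `ξ_j < ∞` for all `j ∈ N`. -/
def HasDominatingChain (M : MarkovSystem K N E) : Prop := ∀ j : N, M.xi j ≠ ⊤

/-- `ξ_j · q_{j j'} = ∑_{e, i(e) = j, t(e) = j'} sup_{x ∈ K_j} p_e(x)`. -/
def xiq (M : MarkovSystem K N E) (j j' : N) : ℝ≥0∞ :=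
  ∑' e : {e : E // M.i e = j ∧ M.t e = j'}, ⨆ x ∈ M.Kset j, ENNReal.ofReal (M.p e.val x)

/-- `c = ∑_{j'} sup_j ξ_j q_{j j'}`. -/
def cConst (M : MarkovSystem K N E) : ℝ≥0∞ := ∑' j' : N, ⨆ j : N, M.xiq j j'

/-- `α^{x_0}_n({j}) = (1/n) ∑_{k=1}^n ((U*)^k δ_{x_0})(K_j)`. -/
def alphaMeas (M : MarkovSystem K N E) (x0 : K) (n : ℕ) (j : N) : ℝ≥0∞ :=
  (n : ℝ≥0∞)⁻¹ * ∑ k ∈ Finset.range n, (M.adjOp^[k + 1] (Measure.dirac x0)) (M.Kset j)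

/-- Condition (T) at `x_0`: the sequence `(α^{x_0}_n)_n` is uniformly tight. -/
def ConditionT (M : MarkovSystem K N E) (x0 : K) : Prop :=
  ∀ ε : ℝ, 0 < ε → ∃ V : Finset N,
    ∀ n : ℕ, (∑' j : {j : N // j ∉ V}, M.alphaMeas x0 (n + 1) j.val) < ENNReal.ofReal ε

/-- `M` is contractive with contraction rate `a`:
`∑_{e, i(e) = j} p_e(x) d(w_e x, w_e y) ≤ a·d(x, y)` on each `K_j`. -/
def IsContractive (M : MarkovSystem K N E) (a : ℝ) : Prop :=
  ∀ j : N, ∀ x ∈ M.Kset j, ∀ y ∈ M.Kset j,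
    (∑' e : {e : E // M.i e = j},
        ENNReal.ofReal (M.p e.val x * dist (M.w e.val x) (M.w e.val y)))
      ≤ ENNReal.ofReal (a * dist x y)

/-- `L(x) = ∑_j d(x, x_j)·1_{K_j}(x)`. -/
def Lfun (M : MarkovSystem K N E) (xp : N → K) : K → ℝ≥0∞ :=
  fun x => ∑' j : N, Set.indicator (M.Kset j) (fun y => ENNReal.ofReal (dist y (xp j))) x

/-- `b = sup_j sup_{x ∈ K_j} ∑_{e, i(e) = j} p_e(x)·d(w_e(x_{i(e)}), x_{t(e)})`. -/
def bConst (M : MarkovSystem K N E) (xp : N → K) : ℝ≥0∞ :=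
  ⨆ j : N, ⨆ x ∈ M.Kset j,
    ∑' e : {e : E // M.i e = j},
      ENNReal.ofReal (M.p e.val x * dist (M.w e.val (xp (M.i e.val))) (xp (M.t e.val)))

/-- `P^m_x` evaluated on a word: `p_{e_0}(x)·p_{e_1}(w_{e_0}x)·⋯`. -/
def wordProb (M : MarkovSystem K N E) : List (Option E) → K → ℝ
  | [], _ => 1
  | o :: rest, x => M.pext o x * M.wordProb rest (M.wext o x)

/-- `Λ = Φ(μ)`: `Λ` is a shift-invariant Borel probability measure with
`Λ(_m[e_m, …, e_n]) = ∫ P^m_x(_m[e_m, …, e_n]) dμ(x)` for all cylinders with `m ≤ 0`. -/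
def IsPhiOf (M : MarkovSystem K N E) (μ : Measure K) (Λ : Measure (CodeSpace E)) : Prop :=
  IsProbabilityMeasure Λ ∧ Measure.map (shiftMap E) Λ = Λ ∧
    ∀ m : ℤ, m ≤ 0 → ∀ es : List (Option E),
      Λ (cylSetL m es) = ∫⁻ x, ENNReal.ofReal (M.wordProb es x) ∂μ

/-- The (negative of the) energy function: `-u(σ) = -log p_{σ_1}(F(σ))` on `D`
(`+∞` if `p_{σ_1}(F(σ)) = 0`) and `+∞` off `D`, valued in `[0, ∞]`. -/
def negEnergy (M : MarkovSystem K N E) (j0 : N) (xp : N → K) (σ : CodeSpace E) : ℝ≥0∞ :=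
  if σ ∈ M.codeDomain j0 xp then
    (σ 1).elim ⊤ fun e =>
      if M.p e (M.code j0 xp σ) = 0 then ⊤
      else ENNReal.ofReal (-Real.log (M.p e (M.code j0 xp σ)))
  else ⊤

/-- The free energy `h_S(Λ) + ∫ u dΛ`, as an extended real number. -/
def freeEnergy (M : MarkovSystem K N E) (j0 : N) (xp : N → K)
    (Λ : Measure (CodeSpace E)) : EReal :=
  (entropyS Λ : EReal) - ((∫⁻ σ, M.negEnergy j0 xp σ ∂Λ : ℝ≥0∞) : EReal)

/-- `Λ₀ ∈ E(u)`: `Λ₀` is a thermodynamic equilibrium state for the energy function `u`. -/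
def IsEquilibriumForU (M : MarkovSystem K N E) (j0 : N) (xp : N → K)
    (Λ0 : Measure (CodeSpace E)) : Prop :=
  IsProbabilityMeasure Λ0 ∧ Measure.map (shiftMap E) Λ0 = Λ0 ∧ entropyS Λ0 ≠ ⊤ ∧
    M.freeEnergy j0 xp Λ0 =
      sSup {r : EReal | ∃ Λ : Measure (CodeSpace E),
        IsProbabilityMeasure Λ ∧ Measure.map (shiftMap E) Λ = Λ ∧ entropyS Λ ≠ ⊤ ∧
          r = M.freeEnergy j0 xp Λ}

end MarkovSystem

end

/-!
Conditioning on the past turns the equilibrium property into a one-step Markov property: for a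
past-measurable set `A` and a letter `e`,
`∫_{A ∩ {σ₁ = e}} h(F ∘ S) dΛ = ∫_A (p_e ∘ F) · h(w_e ∘ F) dΛ`.
Indeed `F ∘ S = w_e ∘ F` almost surely on `{σ₁ = e}`: there the past orbit of `S σ` is the image
under `w_e` of the past orbit of `σ`, which stays in `K_{i(e)}`, and `F σ` itself lies in
`K_{i(e)}` because `p_e ∘ F > 0` almost surely on `{σ₁ = e}`; so continuity of `w_e` on `K_{i(e)}`
applies. Iterating along a word and using shift invariance gives
`Λ(_m[e_m, …, e_n]) = ∫ P_x^m(_m[e_m, …, e_n]) dF(Λ)(x)`.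
-/

section CondExp

variable {α : Type*} {m m0 : MeasurableSpace α} {μ : Measure α} [IsFiniteMeasure μ]
  {s : Set α} {g : α → ℝ}

theorem measure_inter_eq_setLIntegral_of_condExp (hm : m ≤ m0) (hs : MeasurableSet s)
    (hg : μ[s.indicator (fun _ => (1 : ℝ)) | m] =ᵐ[μ] g) {B : Set α}
    (hB : MeasurableSet[m] B) :
    μ (B ∩ s) = ∫⁻ x in B, ENNReal.ofReal (g x) ∂μ := by
  have hint : Integrable (s.indicator fun _ => (1 : ℝ)) μ :=
    (integrable_const 1).indicator hs
  have hg_int : Integrable g (μ.restrict B) := (integrable_condExp.congr hg).restrict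
  have hg_nonneg : 0 ≤ᵐ[μ.restrict B] g := ae_restrict_of_ae <|
    (condExp_nonneg (m := m) (.of_forall fun x =>
      Set.indicator_nonneg (fun _ _ => zero_le_one) x)).congr .rfl hg
  calc μ (B ∩ s) = ENNReal.ofReal (∫ x in B, s.indicator (fun _ => (1 : ℝ)) x ∂μ) := by
        rw [show (s.indicator fun _ => (1 : ℝ)) = s.indicator 1 from rfl,
          integral_indicator_one hs, measureReal_restrict_apply hs, Set.inter_comm,
          measureReal_def, ENNReal.ofReal_toReal (measure_ne_top _ _)]
    _ = ENNReal.ofReal (∫ x in B, g x ∂μ) := by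
        rw [← setIntegral_condExp hm hint hB,
          setIntegral_congr_ae (hm B hB) (hg.mono fun x hx _ => hx)]
    _ = ∫⁻ x in B, ENNReal.ofReal (g x) ∂μ := ofReal_integral_eq_lintegral_ofReal hg_int hg_nonneg

theorem trim_restrict_eq_trim_withDensity_of_condExp (hm : m ≤ m0) (hs : MeasurableSet s)
    (hg : μ[s.indicator (fun _ => (1 : ℝ)) | m] =ᵐ[μ] g) :
    (μ.restrict s).trim hm = (μ.withDensity fun x => ENNReal.ofReal (g x)).trim hm := by
  refine @Measure.ext _ m _ _ fun B hB => ?_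
  rw [trim_measurableSet_eq hm hB, trim_measurableSet_eq hm hB, Measure.restrict_apply (hm B hB),
    withDensity_apply _ (hm B hB)]
  exact measure_inter_eq_setLIntegral_of_condExp hm hs hg hB

theorem setLIntegral_eq_lintegral_mul_of_condExp (hm : m ≤ m0) (hs : MeasurableSet s)
    (hg : μ[s.indicator (fun _ => (1 : ℝ)) | m] =ᵐ[μ] g) {ψ : α → ℝ≥0∞}
    (hψ : Measurable[m] ψ) :
    ∫⁻ x in s, ψ x ∂μ = ∫⁻ x, ENNReal.ofReal (g x) * ψ x ∂μ := by
  have hg_meas : AEMeasurable (fun x => ENNReal.ofReal (g x)) μ :=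
    ENNReal.measurable_ofReal.comp_aemeasurable
      ((stronglyMeasurable_condExp.mono hm).measurable.aemeasurable.congr hg)
  rw [← lintegral_trim hm hψ, trim_restrict_eq_trim_withDensity_of_condExp hm hs hg,
    lintegral_trim hm hψ, lintegral_withDensity_eq_lintegral_mul₀ hg_meas
      (hψ.mono hm le_rfl).aemeasurable]
  rfl

theorem ae_pos_of_condExp (hm : m ≤ m0) (hs : MeasurableSet s)
    (hg : μ[s.indicator (fun _ => (1 : ℝ)) | m] =ᵐ[μ] g) (hgm : Measurable[m] g) :
    ∀ᵐ x ∂μ, x ∈ s → 0 < g x := by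
  have hB : MeasurableSet[m] {x | g x ≤ 0} := measurableSet_le hgm measurable_const
  have hnull : μ ({x | g x ≤ 0} ∩ s) = 0 := by
    rw [measure_inter_eq_setLIntegral_of_condExp hm hs hg hB]
    exact (setLIntegral_congr_fun (hm _ hB) fun x hx => ENNReal.ofReal_eq_zero.mpr hx).trans
      lintegral_zero
  filter_upwards [measure_eq_zero_iff_ae_notMem.mp hnull] with x hx hxs
  exact lt_of_not_ge fun h => hx ⟨h, hxs⟩

end CondExp

section CodeSpace

variable {E : Type*}

theorem measurable_shiftMap : Measurable (shiftMap E) :=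
  measurable_pi_lambda _ fun k => measurable_pi_apply (k + 1)

theorem shiftMap_iterate_apply (j : ℕ) (σ : CodeSpace E) (k : ℤ) :
    (shiftMap E)^[j] σ k = σ (k + j) := by
  induction j generalizing σ with
  | zero => simp
  | succ j ih =>
    rw [Function.iterate_succ_apply, ih]
    simp only [shiftMap]
    congr 1
    push_cast
    ring

theorem preimage_shiftMap_iterate_cylSetL (j : ℕ) (m : ℤ) (es : List (Option E)) :
    (shiftMap E)^[j] ⁻¹' cylSetL m es = cylSetL (m + j) es := by
  ext σ
  simp only [cylSetL, Set.mem_preimage, Set.mem_ofPred_eq, shiftMap_iterate_apply]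
  refine forall₂_congr fun k _ => ?_
  rw [add_right_comm]

theorem cylSetL_append_singleton (m : ℤ) (es : List (Option E)) (o : Option E) :
    cylSetL m (es ++ [o]) = cylSetL m es ∩ {σ | σ (m + es.length) = o} := by
  ext σ
  simp only [cylSetL, Set.mem_inter_iff, Set.mem_ofPred_eq, List.length_append, List.length_cons,
    List.length_nil, List.get_eq_getElem]
  constructor
  · intro h
    refine ⟨fun k hk => ?_, ?_⟩
    · simpa [List.getElem_append_left hk] using h k (by omega)
    · simpa using h es.length (by omega)
  · rintro ⟨h, ho⟩ k hk
    rcases Nat.lt_or_ge k es.length with hk' | hk'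
    · simpa [List.getElem_append_left hk'] using h k hk'
    · obtain rfl : k = es.length := by omega
      simpa using ho

def window (m : ℤ) (n : ℕ) (σ : CodeSpace E) : Fin n → Option E := fun k => σ (m + k)

theorem preimage_window_singleton (m : ℤ) {n : ℕ} (v : Fin n → Option E) :
    window m n ⁻¹' {v} = cylSetL m (List.ofFn v) := by
  ext σ
  simp [cylSetL, window, funext_iff, Fin.forall_iff]

theorem measurable_window (m : ℤ) (n : ℕ) : Measurable (window (E := E) m n) :=
  measurable_pi_lambda _ fun _ => measurable_pi_apply _

theorem cylSetL_nil (m : ℤ) : cylSetL m ([] : List (Option E)) = Set.univ := by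
  simp [cylSetL]

theorem measurableSet_pastAlgebra_cylSetL (es : List (Option E)) :
    MeasurableSet[pastAlgebra E] (cylSetL (1 - es.length) es) := by
  rcases eq_or_ne es [] with rfl | hes
  · rw [cylSetL_nil]
    exact MeasurableSet.univ
  · exact MeasurableSpace.measurableSet_generateFrom ⟨es, hes, rfl⟩

variable [Countable E]

theorem measurableSet_coord_eq (k : ℤ) (o : Option E) :
    MeasurableSet {σ : CodeSpace E | σ k = o} :=
  measurableSet_eq_fun (measurable_pi_apply k) measurable_const

theorem measurableSet_cylSetL (m : ℤ) (es : List (Option E)) : MeasurableSet (cylSetL m es) := by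
  rw [← List.ofFn_get es, ← preimage_window_singleton]
  exact measurable_window m _ (measurableSet_singleton _)

theorem pastAlgebra_le : pastAlgebra E ≤ (inferInstance : MeasurableSpace (CodeSpace E)) :=
  MeasurableSpace.generateFrom_le fun _ ⟨es, _, hA⟩ => hA ▸ measurableSet_cylSetL _ es

theorem measurable_window_pastAlgebra (n : ℕ) :
    Measurable[pastAlgebra E] (window (E := E) (-n) (n + 1)) := by
  refine @measurable_to_countable' _ _ _ _ (pastAlgebra E) _ fun v => ?_
  rw [preimage_window_singleton]
  refine MeasurableSpace.measurableSet_generateFrom ⟨List.ofFn v, by simp, ?_⟩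
  simp

theorem measure_cylSetL_eq_of_map_shiftMap_eq {Λ : Measure (CodeSpace E)}
    (hΛ : Measure.map (shiftMap E) Λ = Λ) {m : ℤ} (hm : m ≤ 1) (es : List (Option E)) :
    Λ (cylSetL m es) = Λ (cylSetL 1 es) := by
  have hpre : (shiftMap E)^[(1 - m).toNat] ⁻¹' cylSetL m es = cylSetL 1 es := by
    rw [preimage_shiftMap_iterate_cylSetL]
    congr 1
    omega
  rw [← hpre, (MeasurePreserving.iterate ⟨measurable_shiftMap, hΛ⟩ _).measure_preimage
    (measurableSet_cylSetL m es).nullMeasurableSet]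

theorem stronglyMeasurable_pastAlgebra_of_dependsOn {β : Type*} [TopologicalSpace β]
    [Nonempty β] {f : CodeSpace E → β} {n : ℕ} (hf : DependsOn f (Set.Icc (-n : ℤ) 0)) :
    StronglyMeasurable[pastAlgebra E] f := by
  have hfac : f.FactorsThrough (window (-n) (n + 1)) := fun σ τ hστ => hf fun i ⟨hi₁, hi₂⟩ => by
    obtain ⟨k, hk, rfl⟩ : ∃ k : ℕ, k < n + 1 ∧ i = -n + k :=
      ⟨(i + n).toNat, by omega, by omega⟩
    exact congrFun hστ ⟨k, hk⟩
  rw [← hfac.extend_comp (fun _ => Classical.arbitrary β)]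
  exact StronglyMeasurable.of_discrete.comp_measurable (measurable_window_pastAlgebra n)

end CodeSpace

namespace MarkovSystem

section Words

variable {K : Type*} [MetricSpace K] [MeasurableSpace K] {N E : Type*} (M : MarkovSystem K N E)

def wordMap (es : List (Option E)) (x : K) : K := es.foldl (fun y o => M.wext o y) x

variable {M}

theorem wordMap_append_singleton (es : List (Option E)) (o : Option E) (x : K) :
    M.wordMap (es ++ [o]) x = M.wext o (M.wordMap es x) := by
  simp [wordMap]

theorem measurable_pext (o : Option E) : Measurable (M.pext o) := by
  cases o with
  | none => exact measurable_const
  | some e => exact M.p_measurable e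

theorem measurable_wext (o : Option E) : Measurable (M.wext o) := by
  cases o with
  | none => exact measurable_id
  | some e => exact M.w_measurable e

theorem measurable_wordProb (es : List (Option E)) : Measurable (M.wordProb es) := by
  induction es with
  | nil => exact measurable_const
  | cons o es ih => exact (measurable_pext o).mul (ih.comp (measurable_wext o))

theorem pext_nonneg (o : Option E) (x : K) : 0 ≤ M.pext o x := by
  cases o with
  | none => exact le_rfl
  | some e => exact M.p_nonneg e x

theorem wordProb_nonneg (es : List (Option E)) (x : K) : 0 ≤ M.wordProb es x := by
  induction es generalizing x with
  | nil => exact zero_le_one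
  | cons o es ih => exact mul_nonneg (pext_nonneg o x) (ih _)

theorem wordProb_append_singleton (es : List (Option E)) (o : Option E) (x : K) :
    M.wordProb (es ++ [o]) x = M.wordProb es x * M.pext o (M.wordMap es x) := by
  induction es generalizing x with
  | nil => simp [wordProb, wordMap]
  | cons o' es ih => simp [wordProb, wordMap, ih, mul_assoc]

end Words

section Orbit

variable {K : Type*} [MetricSpace K] [MeasurableSpace K] {N E : Type*}
  {M : MarkovSystem K N E} {j0 : N} {xp : N → K}

theorem dependsOn_iterW (n : ℕ) : DependsOn (M.iterW · n) (Set.Icc (-n : ℤ) 0) := by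
  induction n with
  | zero =>
    intro σ τ h
    funext y
    simp [iterW, h 0 (by simp)]
  | succ n ih =>
    intro σ τ h
    funext y
    have hn : σ (-(n + 1 : ℤ)) = τ (-(n + 1 : ℤ)) := h _ (by simp)
    simp only [iterW, hn, ih fun i hi => h i ⟨by push_cast at hi ⊢; linarith [hi.1], hi.2⟩]

theorem dependsOn_orbit (n : ℕ) : DependsOn (M.orbit j0 xp · n) (Set.Icc (-n : ℤ) 0) := by
  intro σ τ h
  simp only [orbit, dependsOn_iterW n h, h (-n) (by simp)]

theorem iterW_shiftMap (σ : CodeSpace E) (n : ℕ) (y : K) :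
    M.iterW (shiftMap E σ) (n + 1) y = M.wext (σ 1) (M.iterW σ n y) := by
  induction n generalizing y with
  | zero => rfl
  | succ n ih =>
    simp only [iterW, ← ih]
    congr 3

theorem orbit_shiftMap (σ : CodeSpace E) (n : ℕ) :
    M.orbit j0 xp (shiftMap E σ) (n + 1) = M.wext (σ 1) (M.orbit j0 xp σ n) := by
  have hσ : shiftMap E σ (-(n + 1 : ℕ)) = σ (-n) := by
    simp only [shiftMap]; congr 1; push_cast; ring
  rw [orbit, hσ, iterW_shiftMap]
  rfl

theorem mapsTo_wext (o : Option E) :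
    Set.MapsTo (M.wext o) (M.Kset (M.iext j0 o)) (M.Kset (M.text j0 o)) := by
  cases o with
  | none => exact Set.mapsTo_id _
  | some e => exact M.w_mapsTo e

theorem text_eq_iext_succ {σ : CodeSpace E} (hσ : σ ∈ M.pathSpace) (k : ℤ) :
    M.text j0 (σ k) = M.iext j0 (σ (k + 1)) := by
  obtain ⟨e, e', he, he', hie⟩ := hσ k
  rw [he, he']
  exact hie.symm

theorem iterW_mem_Kset {σ : CodeSpace E} (hσ : σ ∈ M.pathSpace) (n : ℕ) {y : K}
    (hy : y ∈ M.Kset (M.iext j0 (σ (-n)))) : M.iterW σ n y ∈ M.Kset (M.text j0 (σ 0)) := by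
  induction n generalizing y with
  | zero => exact mapsTo_wext (σ 0) (by simpa using hy)
  | succ n ih =>
    refine ih ?_
    have := mapsTo_wext (M := M) (j0 := j0) _ hy
    rwa [text_eq_iext_succ hσ, show (-((n + 1 : ℕ) : ℤ) + 1) = -n by push_cast; ring] at this

theorem orbit_mem_Kset (hxp : ∀ j, xp j ∈ M.Kset j) {σ : CodeSpace E} (hσ : σ ∈ M.pathSpace)
    (n : ℕ) : M.orbit j0 xp σ n ∈ M.Kset (M.text j0 (σ 0)) :=
  iterW_mem_Kset hσ n (hxp _)

variable (M j0 xp) in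
/-- Agrees with the coding map `F` on `D`, but unlike `F` (whose definition involves the future
letters through `D`) it is measurable with respect to the past `𝓕`. -/
noncomputable def orbitLim [Nonempty K] (σ : CodeSpace E) : K := limUnder atTop (M.orbit j0 xp σ)

variable [Nonempty K]

theorem tendsto_orbit_orbitLim {σ : CodeSpace E} (hσ : σ ∈ M.codeDomain j0 xp) :
    Tendsto (M.orbit j0 xp σ) atTop (𝓝 (M.orbitLim j0 xp σ)) :=
  tendsto_nhds_limUnder hσ.2

theorem code_eq_orbitLim {σ : CodeSpace E} (hσ : σ ∈ M.codeDomain j0 xp) :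
    M.code j0 xp σ = M.orbitLim j0 xp σ := by
  rw [code, dif_pos hσ]
  exact (Tendsto.limUnder_eq hσ.2.choose_spec).symm

theorem orbitLim_shiftMap (hxp : ∀ j, xp j ∈ M.Kset j)
    (hw : ∀ e : E, ContinuousOn (M.w e) (M.Kset (M.i e))) {σ : CodeSpace E}
    (hσ : σ ∈ M.codeDomain j0 xp) (hSσ : shiftMap E σ ∈ M.codeDomain j0 xp)
    (hp : 0 < M.pext (σ 1) (M.orbitLim j0 xp σ)) :
    M.orbitLim j0 xp (shiftMap E σ) = M.wext (σ 1) (M.orbitLim j0 xp σ) := by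
  obtain ⟨e, -, he, -⟩ := hσ.1 1
  have hie : M.text j0 (σ 0) = M.i e := by rw [text_eq_iext_succ hσ.1, zero_add, he]; rfl
  rw [he] at hp ⊢
  have hlim : M.orbitLim j0 xp σ ∈ M.Kset (M.i e) := by
    by_contra h
    exact hp.ne' (M.p_zero_outside e _ h)
  have hw_orbit : Tendsto (fun n => M.w e (M.orbit j0 xp σ n)) atTop
      (𝓝 (M.w e (M.orbitLim j0 xp σ))) :=
    ((hw e) _ hlim).tendsto.comp <| tendsto_nhdsWithin_iff.mpr
      ⟨tendsto_orbit_orbitLim hσ, .of_forall fun n => hie ▸ orbit_mem_Kset hxp hσ.1 n⟩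
  have hshift := (tendsto_add_atTop_iff_nat 1).mpr (tendsto_orbit_orbitLim hSσ)
  simp_rw [orbit_shiftMap, he] at hshift
  exact tendsto_nhds_unique hshift hw_orbit

end Orbit

section Measurability

variable {K : Type*} [MetricSpace K] [MeasurableSpace K] {N E : Type*} [Countable E]
  {M : MarkovSystem K N E} {j0 : N} {xp : N → K}

theorem measurableSet_pathSpace : MeasurableSet M.pathSpace := by
  have hR : MeasurableSet {q : Option E × Option E |
      ∃ e e' : E, q.1 = some e ∧ q.2 = some e' ∧ M.i e' = M.t e} :=
    (Set.to_countable _).measurableSet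
  have h := MeasurableSet.iInter fun n : ℤ =>
    ((measurable_pi_apply n).prodMk (measurable_pi_apply (n + 1))) hR
  simpa [pathSpace, Set.ofPred_forall] using h

variable [CompleteSpace K] [Nonempty K]

theorem stronglyMeasurable_orbitLim : StronglyMeasurable[pastAlgebra E] (M.orbitLim j0 xp) :=
  @StronglyMeasurable.limUnder _ _ _ (pastAlgebra E) _ _ _ _ _ _ _ fun n =>
    stronglyMeasurable_pastAlgebra_of_dependsOn (dependsOn_orbit (M := M) (j0 := j0) (xp := xp) n)

theorem measurableSet_codeDomain : MeasurableSet (M.codeDomain j0 xp) :=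
  measurableSet_pathSpace.inter <| StronglyMeasurable.measurableSet_exists_tendsto fun n =>
    (stronglyMeasurable_pastAlgebra_of_dependsOn
      (dependsOn_orbit (M := M) (j0 := j0) (xp := xp) n)).mono pastAlgebra_le

variable [BorelSpace K]

theorem measurable_orbitLim : Measurable (M.orbitLim j0 xp) :=
  stronglyMeasurable_orbitLim.measurable.mono pastAlgebra_le le_rfl

end Measurability

section Equilibrium

variable {K : Type*} [MetricSpace K] [MeasurableSpace K] {N E : Type*}
  {M : MarkovSystem K N E} {j0 : N} {xp : N → K} {Λ : Measure (CodeSpace E)}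

theorem IsEquilibrium.measurePreserving_shiftMap (hΛ : M.IsEquilibrium j0 xp Λ) :
    MeasurePreserving (shiftMap E) Λ Λ :=
  ⟨measurable_shiftMap, hΛ.2.1⟩

variable [CompleteSpace K] [Nonempty K] [Countable E]

theorem IsEquilibrium.ae_mem_codeDomain (hΛ : M.IsEquilibrium j0 xp Λ) :
    ∀ᵐ σ ∂Λ, σ ∈ M.codeDomain j0 xp := by
  have := hΛ.1
  rw [ae_iff, ← Set.compl_def, measure_compl measurableSet_codeDomain (measure_ne_top _ _),
    hΛ.2.2.1, measure_univ, tsub_self]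

theorem IsEquilibrium.code_ae_eq_orbitLim (hΛ : M.IsEquilibrium j0 xp Λ) :
    M.code j0 xp =ᵐ[Λ] M.orbitLim j0 xp :=
  hΛ.ae_mem_codeDomain.mono fun _ => code_eq_orbitLim

theorem IsEquilibrium.condExp_indicator_eq (hΛ : M.IsEquilibrium j0 xp Λ) (o : Option E) :
    Λ[{σ : CodeSpace E | σ 1 = o}.indicator (fun _ => (1 : ℝ)) | pastAlgebra E]
      =ᵐ[Λ] fun σ => M.pext o (M.orbitLim j0 xp σ) := by
  cases o with
  | some e =>
    filter_upwards [hΛ.2.2.2 e, hΛ.code_ae_eq_orbitLim] with σ h hF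
    rw [h, hF]
    rfl
  | none =>
    have hnull : {σ : CodeSpace E | σ 1 = none}.indicator (fun _ => (1 : ℝ)) =ᵐ[Λ] 0 := by
      filter_upwards [hΛ.ae_mem_codeDomain] with σ hσ
      obtain ⟨e, -, he, -⟩ := hσ.1 1
      simp [he]
    filter_upwards [condExp_congr_ae (m := pastAlgebra E) hnull] with σ h
    rw [h, condExp_zero]
    rfl

variable [BorelSpace K]

theorem IsEquilibrium.ae_pext_pos (hΛ : M.IsEquilibrium j0 xp Λ) :
    ∀ᵐ σ ∂Λ, 0 < M.pext (σ 1) (M.orbitLim j0 xp σ) := by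
  have := hΛ.1
  have h := ae_all_iff.mpr fun o : Option E =>
    ae_pos_of_condExp pastAlgebra_le (measurableSet_coord_eq 1 o)
      (hΛ.condExp_indicator_eq o) ((measurable_pext o).comp stronglyMeasurable_orbitLim.measurable)
  filter_upwards [h] with σ hσ using hσ (σ 1) rfl

theorem IsEquilibrium.ae_orbitLim_shiftMap (hΛ : M.IsEquilibrium j0 xp Λ)
    (hxp : ∀ j, xp j ∈ M.Kset j) (hw : ∀ e : E, ContinuousOn (M.w e) (M.Kset (M.i e))) :
    ∀ᵐ σ ∂Λ, M.orbitLim j0 xp (shiftMap E σ) = M.wext (σ 1) (M.orbitLim j0 xp σ) := by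
  filter_upwards [hΛ.ae_mem_codeDomain,
    hΛ.measurePreserving_shiftMap.quasiMeasurePreserving.ae hΛ.ae_mem_codeDomain,
    hΛ.ae_pext_pos] with σ hσ hSσ hp
  exact orbitLim_shiftMap hxp hw hσ hSσ hp

theorem IsEquilibrium.setLIntegral_orbitLim_shiftMap (hΛ : M.IsEquilibrium j0 xp Λ)
    (hxp : ∀ j, xp j ∈ M.Kset j) (hw : ∀ e : E, ContinuousOn (M.w e) (M.Kset (M.i e)))
    {A : Set (CodeSpace E)} (hA : MeasurableSet[pastAlgebra E] A) (o : Option E)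
    {h : K → ℝ≥0∞} (hh : Measurable h) :
    ∫⁻ σ in A ∩ {σ | σ 1 = o}, h (M.orbitLim j0 xp (shiftMap E σ)) ∂Λ
      = ∫⁻ σ in A, ENNReal.ofReal (M.pext o (M.orbitLim j0 xp σ))
          * h (M.wext o (M.orbitLim j0 xp σ)) ∂Λ := by
  have := hΛ.1
  have hA' : MeasurableSet A := pastAlgebra_le A hA
  have hS := measurableSet_coord_eq (E := E) 1 o
  have hψ : Measurable[pastAlgebra E] (A.indicator fun σ => h (M.wext o (M.orbitLim j0 xp σ))) :=
    ((hh.comp (measurable_wext o)).comp stronglyMeasurable_orbitLim.measurable).indicator hA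
  calc ∫⁻ σ in A ∩ {σ | σ 1 = o}, h (M.orbitLim j0 xp (shiftMap E σ)) ∂Λ
      = ∫⁻ σ in A ∩ {σ | σ 1 = o}, h (M.wext o (M.orbitLim j0 xp σ)) ∂Λ := by
        refine setLIntegral_congr_fun_ae (hA'.inter hS) ?_
        filter_upwards [hΛ.ae_orbitLim_shiftMap hxp hw] with σ hσ ⟨_, ho⟩
        rw [hσ, ho]
    _ = ∫⁻ σ in {σ | σ 1 = o}, A.indicator (fun σ => h (M.wext o (M.orbitLim j0 xp σ))) σ ∂Λ := by
        rw [lintegral_indicator hA', Measure.restrict_restrict hA']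
    _ = ∫⁻ σ, ENNReal.ofReal (M.pext o (M.orbitLim j0 xp σ))
          * A.indicator (fun σ => h (M.wext o (M.orbitLim j0 xp σ))) σ ∂Λ :=
        setLIntegral_eq_lintegral_mul_of_condExp pastAlgebra_le hS (hΛ.condExp_indicator_eq o) hψ
    _ = _ := by
        rw [← lintegral_indicator hA']
        congr 1
        funext σ
        by_cases hσ : σ ∈ A <;> simp [hσ]

theorem IsEquilibrium.setLIntegral_cylSetL_orbitLim (hΛ : M.IsEquilibrium j0 xp Λ)
    (hxp : ∀ j, xp j ∈ M.Kset j) (hw : ∀ e : E, ContinuousOn (M.w e) (M.Kset (M.i e)))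
    (es : List (Option E)) {h : K → ℝ≥0∞} (hh : Measurable h) :
    ∫⁻ σ in cylSetL 1 es, h (M.orbitLim j0 xp ((shiftMap E)^[es.length] σ)) ∂Λ
      = ∫⁻ σ, ENNReal.ofReal (M.wordProb es (M.orbitLim j0 xp σ))
          * h (M.wordMap es (M.orbitLim j0 xp σ)) ∂Λ := by
  induction es using List.reverseRecOn generalizing h with
  | nil => simp [cylSetL_nil, wordProb, wordMap]
  | append_singleton es o ih =>
    set F := M.orbitLim j0 xp
    set A := cylSetL (1 - es.length) es
    have hA := measurableSet_pastAlgebra_cylSetL es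
    have hshift := hΛ.measurePreserving_shiftMap.iterate es.length
    have hpre : (shiftMap E)^[es.length] ⁻¹' A = cylSetL 1 es := by
      rw [preimage_shiftMap_iterate_cylSetL, sub_add_cancel]
    have hcyl : cylSetL 1 (es ++ [o])
        = (shiftMap E)^[es.length] ⁻¹' (A ∩ {σ | σ 1 = o}) := by
      rw [Set.preimage_inter, hpre, cylSetL_append_singleton]
      ext σ
      simp [shiftMap_iterate_apply, add_comm]
    have hh' : Measurable fun x => ENNReal.ofReal (M.pext o x) * h (M.wext o x) :=
      (ENNReal.measurable_ofReal.comp (measurable_pext o)).mul (hh.comp (measurable_wext o))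
    calc ∫⁻ σ in cylSetL 1 (es ++ [o]), h (F ((shiftMap E)^[(es ++ [o]).length] σ)) ∂Λ
        = ∫⁻ σ in A ∩ {σ | σ 1 = o}, h (F (shiftMap E σ)) ∂Λ := by
          rw [hcyl, List.length_append, List.length_singleton]
          simp_rw [Function.iterate_succ_apply']
          exact hshift.setLIntegral_comp_preimage (f := fun σ => h (F (shiftMap E σ)))
            ((pastAlgebra_le A hA).inter (measurableSet_coord_eq 1 o))
            (hh.comp (measurable_orbitLim.comp measurable_shiftMap))
        _ = ∫⁻ σ in A, ENNReal.ofReal (M.pext o (F σ)) * h (M.wext o (F σ)) ∂Λ :=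
          hΛ.setLIntegral_orbitLim_shiftMap hxp hw hA o hh
        _ = ∫⁻ σ in cylSetL 1 es, ENNReal.ofReal (M.pext o (F ((shiftMap E)^[es.length] σ)))
              * h (M.wext o (F ((shiftMap E)^[es.length] σ))) ∂Λ := by
          rw [← hpre]
          exact (hshift.setLIntegral_comp_preimage (pastAlgebra_le A hA)
            (hh'.comp measurable_orbitLim)).symm
        _ = _ := by
          rw [ih hh']
          congr 1
          funext σ
          rw [wordProb_append_singleton, wordMap_append_singleton,
            ENNReal.ofReal_mul (wordProb_nonneg _ _), mul_assoc]

end Equilibrium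

end MarkovSystem

variable {K : Type*} [MetricSpace K] [CompleteSpace K] [MeasurableSpace K] [BorelSpace K]
  {N E : Type*} [Countable N] [Countable E]

/-- If each `w_e|_{K_{i(e)}}` is uniformly continuous, then `Φ(F(M)) = M`
for every equilibrium state `M ∈ E(M)`: i.e. `M` itself satisfies the defining cylinder
property of `Φ` applied to the pushforward `F(M)`. -/
theorem phi_pushforward_eq_self
    (M : MarkovSystem K N E) (j0 : N) (xp : N → K) (hxp : ∀ j, xp j ∈ M.Kset j)
    (hw : ∀ e : E, UniformContinuousOn (M.w e) (M.Kset (M.i e)))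
    (Λ : Measure (CodeSpace E)) (hΛ : M.IsEquilibrium j0 xp Λ) :
    M.IsPhiOf (Measure.map (M.code j0 xp) Λ) Λ := by
  have : Nonempty K := ⟨xp j0⟩
  refine ⟨hΛ.1, hΛ.2.1, fun m hm es => ?_⟩
  have hMarkov := hΛ.setLIntegral_cylSetL_orbitLim hxp (fun e => (hw e).continuousOn) es
    (h := fun _ => 1) measurable_const
  simp only [setLIntegral_one, mul_one] at hMarkov
  rw [measure_cylSetL_eq_of_map_shiftMap_eq hΛ.2.1 (by omega), hMarkov,
    Measure.map_congr hΛ.code_ae_eq_orbitLim,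
    lintegral_map (MarkovSystem.measurable_wordProb es).ennreal_ofReal
      MarkovSystem.measurable_orbitLim]
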